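/- For q = 2 and n ≥ 3, the set V_{n−1} = {v ∈ V \ {0} : α_{n−1} ∉ S_v} is a minimal resolving set of the non-zero component graph Γ(V). -/

import Mathlib

/-!
The graph has diameter two, since the all-ones vector is adjacent to every other vertex; hence the
distance to `w` only records whether a vertex is `w`, a neighbour of `w`, or neither. Let
`W = {v | v i₀ = 0}`. A vertex of `W` is recognised by its zero distance to itself. A vertex `u`
outside `W` is adjacent to the basis vector `e_j ∈ W` (`j ≠ i₀`) exactly when `u j ≠ 0`, which
over GF(2) determines `u j`. Conversely, setting the `i₀`-coordinate of `w₀ ∈ W` to `1` yields a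
vertex at the same distance as `w₀` from every vertex of `W` other than `w₀`, so no proper subset
of `W` resolves.
-/

/-- `W` is a resolving set of `G`: distinct vertices have distinct distance vectors to `W`. -/
def Resolves {α : Type*} (G : SimpleGraph α) (W : Set α) : Prop :=
  ∀ u v : α, (∀ w ∈ W, G.dist u w = G.dist v w) → u = v

/-- The metric dimension of `G`: minimum cardinality of a resolving set. -/
noncomputable def metricDim {α : Type*} (G : SimpleGraph α) : ℕ :=
  sInf {k | ∃ W : Set α, W.ncard = k ∧ Resolves G W}

/-- A minimal resolving set: no proper subset resolves. -/
def MinimalResolves {α : Type*} (G : SimpleGraph α) (W : Set α) : Prop :=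
  Resolves G W ∧ ∀ W' ⊂ W, ¬ Resolves G W'

/-- The exchange property for minimal resolving sets. -/
def ExchangeProperty {α : Type*} (G : SimpleGraph α) : Prop :=
  ∀ W₁ W₂ : Set α, MinimalResolves G W₁ → MinimalResolves G W₂ →
    ∀ r ∈ W₁, ∃ s ∈ W₂, MinimalResolves G (insert r (W₂ \ {s}))

/-- `u` and `v` are twins: equal open neighborhoods or equal closed neighborhoods. -/
def Twins {α : Type*} (G : SimpleGraph α) (u v : α) : Prop :=
  G.neighborSet u = G.neighborSet v ∨
    insert u (G.neighborSet u) = insert v (G.neighborSet v)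

/-- The non-zero component graph of `Fin n → F` with respect to the standard basis:
vertices are the non-zero vectors, adjacency means the supports (skeletons) intersect. -/
def NZCGraph (F : Type*) [Field F] (n : ℕ) :
    SimpleGraph {v : Fin n → F // v ≠ 0} where
  Adj u v := u ≠ v ∧ ∃ i, (u : Fin n → F) i ≠ 0 ∧ (v : Fin n → F) i ≠ 0
  symm := by
    constructor
    rintro u v ⟨h, i, hu, hv⟩
    exact ⟨h.symm, i, hv, hu⟩
  loopless := by constructor; rintro u ⟨h, _⟩; exact h rfl

lemma ZMod.two_eq_of_ne_zero_iff {a b : ZMod 2} (h : a ≠ 0 ↔ b ≠ 0) : a = b := by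
  revert a b; decide

namespace SimpleGraph

variable {V : Type*} {G : SimpleGraph V}

lemma edist_le_two_of_forall_adj (z : V) (hz : ∀ v, v ≠ z → G.Adj z v) (u v : V) :
    G.edist u v ≤ 2 := by
  have hle : ∀ x, G.edist z x ≤ 1 := fun x =>
    edist_le_one_iff_adj_or_eq.mpr <| (eq_or_ne x z).elim (fun h => .inr h.symm) (.inl ∘ hz x)
  calc G.edist u v ≤ G.edist u z + G.edist z v := G.edist_triangle
    _ ≤ 1 + 1 := add_le_add (edist_comm ▸ hle u) (hle v)
    _ = 2 := by norm_num

lemma dist_eq_two_of_ediam_le_two (hG : G.ediam ≤ 2) {u v : V} (hne : u ≠ v)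
    (hadj : ¬G.Adj u v) : G.dist u v = 2 := by
  have hedist : G.edist u v ≤ 2 := edist_le_ediam.trans hG
  have hr : G.Reachable u v := reachable_of_edist_ne_top (ne_top_of_le_ne_top (by simp) hedist)
  have hle : G.dist u v ≤ 2 := by exact_mod_cast hr.coe_dist_eq_edist ▸ hedist
  have hlt := hr.one_lt_dist_of_ne_of_not_adj hne hadj
  omega

lemma dist_eq_dist_iff_of_ediam_le_two (hG : G.ediam ≤ 2) {u v w : V} :
    G.dist u w = G.dist v w ↔ (u = w ↔ v = w) ∧ (G.Adj u w ↔ G.Adj v w) := by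
  classical
  have hdist : ∀ x, G.dist x w = if x = w then 0 else if G.Adj x w then 1 else 2 := by
    intro x
    split_ifs with hx hadj
    · simp [hx]
    · exact dist_eq_one_iff_adj.mpr hadj
    · exact dist_eq_two_of_ediam_le_two hG hx hadj
  rw [hdist u, hdist v]
  by_cases hu : u = w <;> by_cases hv : v = w <;> subst_vars <;> split_ifs <;> simp_all

end SimpleGraph

variable {α : Type*} {G : SimpleGraph α}

lemma Resolves.mono {W W' : Set α} (h : Resolves G W) (hWW' : W ⊆ W') : Resolves G W' :=
  fun u v huv => h u v fun w hw => huv w (hWW' hw)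

lemma minimalResolves_iff {W : Set α} :
    MinimalResolves G W ↔ Resolves G W ∧ ∀ w ∈ W, ¬Resolves G (W \ {w}) := by
  refine ⟨fun h => ⟨h.1, fun w hw => h.2 _ (Set.sdiff_singleton_ssubset.mpr hw)⟩,
    fun h => ⟨h.1, fun W' hW' hres => ?_⟩⟩
  obtain ⟨w, hwW, hwW'⟩ := Set.exists_of_ssubset hW'
  exact h.2 w hwW (hres.mono fun x hx => ⟨hW'.subset hx, fun hxw => hwW' (hxw ▸ hx)⟩)

namespace NZCGraph

variable {F : Type*} [Field F] {n : ℕ}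

lemma ediam_le_two : (NZCGraph F n).ediam ≤ 2 := by
  refine SimpleGraph.ediam_le_iff.mpr fun u v => ?_
  obtain ⟨i, hi⟩ := Function.ne_iff.mp u.2
  have hone : (fun _ : Fin n => (1 : F)) ≠ 0 := Function.ne_iff.mpr ⟨i, one_ne_zero⟩
  refine SimpleGraph.edist_le_two_of_forall_adj (G := NZCGraph F n) ⟨_, hone⟩
    (fun x hx => ⟨hx.symm, ?_⟩) u v
  obtain ⟨j, hj⟩ := Function.ne_iff.mp x.2
  exact ⟨j, one_ne_zero, hj⟩

lemma adj_single_iff {u : {v : Fin n → F // v ≠ 0}} {j : Fin n} :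
    (NZCGraph F n).Adj u ⟨Pi.single j 1, by simp⟩ ↔
      u ≠ ⟨Pi.single j 1, by simp⟩ ∧ (u : Fin n → F) j ≠ 0 := by
  refine and_congr_right fun _ => ⟨fun ⟨i, hu, hi⟩ => ?_, fun hj => ⟨j, hj, by simp⟩⟩
  obtain rfl : i = j := by by_contra hij; simp [hij] at hi
  exact hu

theorem resolves_setOf_apply_eq_zero (i₀ : Fin n) :
    Resolves (NZCGraph (ZMod 2) n) {v | (v : Fin n → ZMod 2) i₀ = 0} := by
  intro u v h
  have hdist w hw := (SimpleGraph.dist_eq_dist_iff_of_ediam_le_two ediam_le_two).mp (h w hw)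
  by_cases hu : (u : Fin n → ZMod 2) i₀ = 0
  · exact ((hdist u hu).1.mp rfl).symm
  by_cases hv : (v : Fin n → ZMod 2) i₀ = 0
  · exact (hdist v hv).1.mpr rfl
  refine Subtype.ext <| funext fun j => ZMod.two_eq_of_ne_zero_iff ?_
  obtain rfl | hj := eq_or_ne j i₀
  · exact iff_of_true hu hv
  have hsingle : (Pi.single j 1 : Fin n → ZMod 2) i₀ = 0 := Pi.single_eq_of_ne hj.symm 1
  have hne {x : {v : Fin n → ZMod 2 // v ≠ 0}} (hx : (x : Fin n → ZMod 2) i₀ ≠ 0) :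
      x ≠ ⟨Pi.single j 1, by simp⟩ := fun hxe => hx (hxe ▸ hsingle)
  simpa only [adj_single_iff, hne hu, hne hv, ne_eq, not_false_eq_true, true_and]
    using (hdist ⟨Pi.single j 1, by simp⟩ hsingle).2

theorem not_resolves_diff_singleton (i₀ : Fin n) {w₀ : {v : Fin n → F // v ≠ 0}}
    (hw₀ : (w₀ : Fin n → F) i₀ = 0) :
    ¬Resolves (NZCGraph F n) ({v | (v : Fin n → F) i₀ = 0} \ {w₀}) := by
  have hupdate : Function.update (w₀ : Fin n → F) i₀ 1 ≠ 0 :=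
    Function.ne_iff.mpr ⟨i₀, by simp⟩
  set v : {v : Fin n → F // v ≠ 0} := ⟨_, hupdate⟩
  have hv : (v : Fin n → F) i₀ = 1 := by simp [v]
  have hne {w : {v : Fin n → F // v ≠ 0}} (hw : (w : Fin n → F) i₀ = 0) : v ≠ w :=
    fun hvw => one_ne_zero (hv.symm.trans (hvw ▸ hw))
  intro hres
  refine hne hw₀ (hres v w₀ fun w ⟨hw, hww₀⟩ => ?_)
  refine (SimpleGraph.dist_eq_dist_iff_of_ediam_le_two ediam_le_two).mpr
    ⟨iff_of_false (hne hw) (fun h => hww₀ h.symm),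
      and_congr (iff_of_true (hne hw) (fun h => hww₀ h.symm)) ?_⟩
  refine exists_congr fun i => ?_
  obtain rfl | hi := eq_or_ne i i₀
  · exact iff_of_false (fun h => h.2 hw) (fun h => h.2 hw)
  · simp [v, Function.update_of_ne hi]

end NZCGraph

theorem stmt14 (n : ℕ) (hn : 3 ≤ n) :
    MinimalResolves (NZCGraph (ZMod 2) n)
      {v : {v : Fin n → ZMod 2 // v ≠ 0} |
        (v : Fin n → ZMod 2) ⟨n - 2, by omega⟩ = 0} :=
  minimalResolves_iff.mpr ⟨NZCGraph.resolves_setOf_apply_eq_zero _,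
    fun _ hw => NZCGraph.not_resolves_diff_singleton _ hw⟩
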